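/- arXiv:2307.00525 — 2 statements merged into one kernel-verified Lean document; each statement's English description precedes it below -/
import Mathlib

section
/- The matrix F = A·Q₂⁻¹ satisfies (F − I)(F + I)(F² + I) = 0; hence F is diagonalizable with at most four distinct eigenvalues ±1, ±i. -/
/-
The Schur complements S = B A⁻¹ Bᵀ and X = C S⁻¹ Cᵀ are positive definite, so Q₂ is block upper
triangular with invertible diagonal blocks, and a blockwise check gives 𝒜 = F₀ Q₂ for
F₀ = (I, 0, 0; B A⁻¹, -I, -2 Cᵀ X⁻¹; 0, C S⁻¹, I); thus F = F₀. Its square is block lower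
triangular with diagonal blocks I, I - 2W, -I, where W = Cᵀ X⁻¹ C S⁻¹ is idempotent; hence
(I - 2W)² = I and F⁴ = I. As t⁴ - 1 is squarefree over ℂ, F is semisimple, hence diagonalizable,
and every eigenvalue is a fourth root of unity.
-/

open Matrix Complex

/-- A 3×3 block matrix with blocks of sizes n, m, l. -/
def blk3 {n m l : ℕ}
    (M11 : Matrix (Fin n) (Fin n) ℝ) (M12 : Matrix (Fin n) (Fin m) ℝ) (M13 : Matrix (Fin n) (Fin l) ℝ)
    (M21 : Matrix (Fin m) (Fin n) ℝ) (M22 : Matrix (Fin m) (Fin m) ℝ) (M23 : Matrix (Fin m) (Fin l) ℝ)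
    (M31 : Matrix (Fin l) (Fin n) ℝ) (M32 : Matrix (Fin l) (Fin m) ℝ) (M33 : Matrix (Fin l) (Fin l) ℝ) :
    Matrix (Fin n ⊕ (Fin m ⊕ Fin l)) (Fin n ⊕ (Fin m ⊕ Fin l)) ℝ :=
  Matrix.fromBlocks M11
    (Matrix.of fun i j => Sum.elim (M12 i) (M13 i) j)
    (Matrix.of fun i j => Sum.elim (fun k => M21 k j) (fun k => M31 k j) i)
    (Matrix.fromBlocks M22 M23 M32 M33)

theorem IsIdempotentElem.one_sub_two_nsmul_mul_self {R : Type*} [Ring R] {e : R}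
    (he : IsIdempotentElem e) : (1 - 2 • e) * (1 - 2 • e) = 1 := by
  have h : (1 - 2 • e) * (1 - 2 • e) = 1 + 4 • (e * e - e) := by noncomm_ring
  rw [h, he.eq, sub_self, smul_zero, add_zero]

theorem Matrix.PosDef.mul_mul_transpose_of_rank_eq {p q : Type*} [Fintype p] [Fintype q]
    {M : Matrix q q ℝ} (hM : M.PosDef) {B : Matrix p q ℝ} (hB : B.rank = Fintype.card p) :
    (B * M * Bᵀ).PosDef := by
  have hrows : LinearIndependent ℝ B.row := by
    rw [linearIndependent_iff_card_eq_finrank_span, Set.finrank, ← rank_eq_finrank_span_row, hB]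
  simpa using hM.mul_mul_conjTranspose_same (vecMul_injective_iff.mpr hrows)

theorem Module.End.IsSemisimple.exists_basis_eigenvectors {K V ι : Type*} [Field K] [IsAlgClosed K]
    [AddCommGroup V] [Module K V] [FiniteDimensional K V] {f : Module.End K V}
    (hf : f.IsSemisimple) (b₀ : Module.Basis ι K V) :
    ∃ (b : Module.Basis ι K V) (d : ι → K), ∀ i, f (b i) = d i • b i := by
  classical
  have hint := DirectSum.isInternal_submodule_of_iSupIndep_of_iSup_eq_top
    f.eigenspaces_iSupIndep hf.iSup_eigenspace_eq_top
  let v := hint.collectedBasis fun μ ↦ Module.finBasis K (f.eigenspace μ)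
  let e := v.indexEquiv b₀
  refine ⟨v.reindex e, fun i ↦ (e.symm i).1, fun i ↦ ?_⟩
  rw [Module.Basis.reindex_apply]
  exact Module.End.mem_eigenspace_iff.mp (hint.collectedBasis_mem _ _)

theorem Matrix.exists_eq_mul_diagonal_mul_inv_of_isSemisimple {K ι : Type*} [Field K]
    [IsAlgClosed K] [Fintype ι] [DecidableEq ι] {M : Matrix ι ι K}
    (hM : Module.End.IsSemisimple (Matrix.toLin' M)) :
    ∃ (P : Matrix ι ι K) (d : ι → K), IsUnit P.det ∧ M = P * Matrix.diagonal d * P⁻¹ := by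
  obtain ⟨b, d, hb⟩ := hM.exists_basis_eigenvectors (Pi.basisFun K ι)
  let b₀ := Pi.basisFun K ι
  have hdiag : LinearMap.toMatrix b b (Matrix.toLin' M) = Matrix.diagonal d := by
    ext i j
    rw [LinearMap.toMatrix_apply, hb j, map_smul, Module.Basis.repr_self,
      Matrix.diagonal_apply, Finsupp.smul_apply, Finsupp.single_apply]
    split_ifs <;> simp_all [eq_comm]
  have hP : b₀.toMatrix b * b.toMatrix b₀ = 1 := b₀.toMatrix_mul_toMatrix_flip b
  refine ⟨b₀.toMatrix b, d, Matrix.isUnit_det_of_right_inverse hP, ?_⟩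
  rw [Matrix.inv_eq_right_inv hP, ← hdiag, basis_toMatrix_mul_linearMap_toMatrix_mul_basis_toMatrix,
    LinearMap.toMatrix_eq_toMatrix', LinearMap.toMatrix'_toLin']

open Polynomial in
theorem Matrix.isSemisimple_toLin'_of_pow_eq_one {K ι : Type*} [Field K]
    [Fintype ι] [DecidableEq ι] {M : Matrix ι ι K} {k : ℕ} (hk : (k : K) ≠ 0) (hM : M ^ k = 1) :
    Module.End.IsSemisimple (Matrix.toLin' M) := by
  have hsep : (X ^ k - C (1 : K)).Separable := separable_X_pow_sub_C 1 hk one_ne_zero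
  refine Module.End.isSemisimple_of_squarefree_aeval_eq_zero hsep.squarefree ?_
  change aeval (Matrix.toLinAlgEquiv' M) _ = 0
  rw [map_sub, aeval_X_pow, aeval_C, ← map_pow, hM, map_one, map_one, sub_self]

theorem spectrum.pow_eq_one_of_pow_eq_one {K A : Type*} [Field K] [Ring A] [Algebra K A]
    {a : A} {k : ℕ} (ha : a ^ k = 1) {μ : K} (hμ : μ ∈ spectrum K a) : μ ^ k = 1 := by
  have : Nontrivial A := (subsingleton_or_nontrivial A).resolve_left fun _ ↦ by
    simp [spectrum.of_subsingleton] at hμ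
  simpa [ha, spectrum.one_eq] using spectrum.pow_mem_pow a k hμ

theorem Complex.pow_four_eq_one_iff {z : ℂ} :
    z ^ 4 = 1 ↔ z = 1 ∨ z = -1 ∨ z = I ∨ z = -I := by
  constructor
  · intro h
    have : (z - 1) * ((z + 1) * ((z - I) * (z + I))) = 0 := by
      linear_combination h + (1 - z ^ 2) * I_sq
    simpa only [mul_eq_zero, sub_eq_zero, add_eq_zero_iff_eq_neg] using this
  · rintro (rfl | rfl | rfl | rfl) <;> norm_num [pow_succ, I_mul_I]

section Blk3

variable {n m l : ℕ}

theorem blk3_mul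
    (A₁₁ : Matrix (Fin n) (Fin n) ℝ) (A₁₂ : Matrix (Fin n) (Fin m) ℝ) (A₁₃ : Matrix (Fin n) (Fin l) ℝ)
    (A₂₁ : Matrix (Fin m) (Fin n) ℝ) (A₂₂ : Matrix (Fin m) (Fin m) ℝ) (A₂₃ : Matrix (Fin m) (Fin l) ℝ)
    (A₃₁ : Matrix (Fin l) (Fin n) ℝ) (A₃₂ : Matrix (Fin l) (Fin m) ℝ) (A₃₃ : Matrix (Fin l) (Fin l) ℝ)
    (B₁₁ : Matrix (Fin n) (Fin n) ℝ) (B₁₂ : Matrix (Fin n) (Fin m) ℝ) (B₁₃ : Matrix (Fin n) (Fin l) ℝ)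
    (B₂₁ : Matrix (Fin m) (Fin n) ℝ) (B₂₂ : Matrix (Fin m) (Fin m) ℝ) (B₂₃ : Matrix (Fin m) (Fin l) ℝ)
    (B₃₁ : Matrix (Fin l) (Fin n) ℝ) (B₃₂ : Matrix (Fin l) (Fin m) ℝ) (B₃₃ : Matrix (Fin l) (Fin l) ℝ) :
    blk3 A₁₁ A₁₂ A₁₃ A₂₁ A₂₂ A₂₃ A₃₁ A₃₂ A₃₃ * blk3 B₁₁ B₁₂ B₁₃ B₂₁ B₂₂ B₂₃ B₃₁ B₃₂ B₃₃ =
      blk3 (A₁₁ * B₁₁ + A₁₂ * B₂₁ + A₁₃ * B₃₁) (A₁₁ * B₁₂ + A₁₂ * B₂₂ + A₁₃ * B₃₂)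
        (A₁₁ * B₁₃ + A₁₂ * B₂₃ + A₁₃ * B₃₃)
        (A₂₁ * B₁₁ + A₂₂ * B₂₁ + A₂₃ * B₃₁) (A₂₁ * B₁₂ + A₂₂ * B₂₂ + A₂₃ * B₃₂)
        (A₂₁ * B₁₃ + A₂₂ * B₂₃ + A₂₃ * B₃₃)
        (A₃₁ * B₁₁ + A₃₂ * B₂₁ + A₃₃ * B₃₁) (A₃₁ * B₁₂ + A₃₂ * B₂₂ + A₃₃ * B₃₂)
        (A₃₁ * B₁₃ + A₃₂ * B₂₃ + A₃₃ * B₃₃) := by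
  ext (i | i | i) (j | j | j) <;>
    simp [blk3, mul_apply, Fintype.sum_sum_type, add_assoc]

theorem blk3_one : blk3 (1 : Matrix (Fin n) (Fin n) ℝ) 0 0 0 (1 : Matrix (Fin m) (Fin m) ℝ) 0 0 0
    (1 : Matrix (Fin l) (Fin l) ℝ) = 1 := by
  ext (i | i | i) (j | j | j) <;> simp [blk3, one_apply]

theorem det_blk3_of_lower_eq_zero (A₁₁ : Matrix (Fin n) (Fin n) ℝ) (A₁₂ : Matrix (Fin n) (Fin m) ℝ)
    (A₁₃ : Matrix (Fin n) (Fin l) ℝ) (A₂₂ : Matrix (Fin m) (Fin m) ℝ)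
    (A₂₃ : Matrix (Fin m) (Fin l) ℝ) (A₃₃ : Matrix (Fin l) (Fin l) ℝ) :
    (blk3 A₁₁ A₁₂ A₁₃ 0 A₂₂ A₂₃ 0 0 A₃₃).det = A₁₁.det * A₂₂.det * A₃₃.det := by
  have h₀ : (of fun i j => Sum.elim (fun k => (0 : Matrix (Fin m) (Fin n) ℝ) k j)
      (fun k => (0 : Matrix (Fin l) (Fin n) ℝ) k j) i) = 0 := by
    ext (i | i) j <;> rfl
  rw [blk3, h₀, det_fromBlocks_zero₂₁, det_fromBlocks_zero₂₁, mul_assoc]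

end Blk3

section SaddlePoint

variable {n m l : ℕ} (A : Matrix (Fin n) (Fin n) ℝ) (B : Matrix (Fin m) (Fin n) ℝ)
  (C : Matrix (Fin l) (Fin m) ℝ) (S : Matrix (Fin m) (Fin m) ℝ) (X : Matrix (Fin l) (Fin l) ℝ)

noncomputable def saddlePrecondProduct : Matrix (Fin n ⊕ (Fin m ⊕ Fin l)) (Fin n ⊕ (Fin m ⊕ Fin l)) ℝ :=
  blk3 1 0 0 (B * A⁻¹) (-1) (-(2 • (Cᵀ * X⁻¹))) 0 (C * S⁻¹) 1

variable {A B C S X}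

theorem saddlePrecondProduct_mul (hA : IsUnit A.det) (hS : S = B * A⁻¹ * Bᵀ) (hSu : IsUnit S.det)
    (hX : X = C * S⁻¹ * Cᵀ) (hXu : IsUnit X.det) :
    saddlePrecondProduct A B C S X * blk3 A Bᵀ 0 0 S Cᵀ 0 0 (-X) = blk3 A Bᵀ 0 B 0 Cᵀ 0 C 0 := by
  rw [saddlePrecondProduct, blk3_mul]
  simp only [Matrix.mul_zero, Matrix.zero_mul, Matrix.one_mul, add_zero, zero_add,
    Matrix.mul_neg, Matrix.neg_mul, neg_neg, Matrix.add_mul, nonsing_inv_mul_cancel_right _ _ hA,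
    nonsing_inv_mul_cancel_right _ _ hSu, nonsing_inv_mul_cancel_right _ _ hXu, ← hS, ← hX,
    add_neg_cancel, neg_zero, two_smul, neg_add_cancel_left]

theorem isIdempotentElem_transpose_mul_inv_mul_mul_inv (hX : X = C * S⁻¹ * Cᵀ)
    (hXu : IsUnit X.det) : IsIdempotentElem (Cᵀ * X⁻¹ * C * S⁻¹) := by
  calc Cᵀ * X⁻¹ * C * S⁻¹ * (Cᵀ * X⁻¹ * C * S⁻¹)
      = Cᵀ * X⁻¹ * (C * S⁻¹ * Cᵀ) * X⁻¹ * C * S⁻¹ := by simp only [Matrix.mul_assoc]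
    _ = Cᵀ * X⁻¹ * C * S⁻¹ := by rw [← hX, mul_nonsing_inv_cancel_right _ _ hXu]

theorem saddlePrecondProduct_mul_self (hX : X = C * S⁻¹ * Cᵀ) (hXu : IsUnit X.det) :
    saddlePrecondProduct A B C S X * saddlePrecondProduct A B C S X =
      blk3 1 0 0 0 (1 - 2 • (Cᵀ * X⁻¹ * C * S⁻¹)) 0 (C * S⁻¹ * B * A⁻¹) 0 (-1) := by
  have hXX : C * (S⁻¹ * (Cᵀ * X⁻¹)) = 1 := by
    rw [← Matrix.mul_assoc, ← Matrix.mul_assoc, ← hX, mul_nonsing_inv _ hXu]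
  rw [saddlePrecondProduct, blk3_mul]
  simp only [Matrix.mul_zero, Matrix.zero_mul, Matrix.one_mul, Matrix.mul_one, add_zero, zero_add,
    Matrix.mul_neg, Matrix.neg_mul, neg_neg, Matrix.smul_mul, Matrix.mul_smul, Matrix.mul_assoc, hXX]
  abel_nf

theorem saddlePrecondProduct_pow_four (hX : X = C * S⁻¹ * Cᵀ) (hXu : IsUnit X.det) :
    saddlePrecondProduct A B C S X ^ 4 = 1 := by
  rw [show 4 = 2 + 2 from rfl, pow_add, sq, saddlePrecondProduct_mul_self hX hXu, blk3_mul,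
    (isIdempotentElem_transpose_mul_inv_mul_mul_inv hX hXu).one_sub_two_nsmul_mul_self, ← blk3_one]
  simp

end SaddlePoint

theorem stmt3 {n m l : ℕ} (A : Matrix (Fin n) (Fin n) ℝ) (B : Matrix (Fin m) (Fin n) ℝ)
    (C : Matrix (Fin l) (Fin m) ℝ) (hA : A.PosDef) (hB : B.rank = m) (hC : C.rank = l)
    (S : Matrix (Fin m) (Fin m) ℝ) (hS : S = B * A⁻¹ * Bᵀ)
    (X : Matrix (Fin l) (Fin l) ℝ) (hX : X = C * S⁻¹ * Cᵀ)
    (𝒜 Q₂ : Matrix (Fin n ⊕ (Fin m ⊕ Fin l)) (Fin n ⊕ (Fin m ⊕ Fin l)) ℝ)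
    (h𝒜 : 𝒜 = blk3 A Bᵀ 0 B 0 Cᵀ 0 C 0)
    (hQ : Q₂ = blk3 A Bᵀ 0 0 S Cᵀ 0 0 (-X))
    (F : Matrix (Fin n ⊕ (Fin m ⊕ Fin l)) (Fin n ⊕ (Fin m ⊕ Fin l)) ℝ)
    (hF : F = 𝒜 * Q₂⁻¹) :
    (F - 1) * (F + 1) * (F ^ 2 + 1) = 0 ∧
    (∃ (P : Matrix (Fin n ⊕ (Fin m ⊕ Fin l)) (Fin n ⊕ (Fin m ⊕ Fin l)) ℂ)
        (d : (Fin n ⊕ (Fin m ⊕ Fin l)) → ℂ),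
      IsUnit P.det ∧ F.map Complex.ofReal = P * Matrix.diagonal d * P⁻¹) ∧
    (∀ μ ∈ spectrum ℂ (F.map Complex.ofReal),
      μ = 1 ∨ μ = -1 ∨ μ = Complex.I ∨ μ = -Complex.I) := by
  have hSpd : S.PosDef := hS ▸ hA.inv.mul_mul_transpose_of_rank_eq (by rw [hB, Fintype.card_fin])
  have hXpd : X.PosDef := hX ▸ hSpd.inv.mul_mul_transpose_of_rank_eq (by rw [hC, Fintype.card_fin])
  have hAu : IsUnit A.det := hA.det_pos.ne'.isUnit
  have hSu : IsUnit S.det := hSpd.det_pos.ne'.isUnit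
  have hXu : IsUnit X.det := hXpd.det_pos.ne'.isUnit
  have hQu : IsUnit Q₂.det := by
    rw [hQ, det_blk3_of_lower_eq_zero, det_neg]
    exact (hAu.mul hSu).mul ((isUnit_neg_one.pow _).mul hXu)
  have hF4 : F ^ 4 = 1 := by
    rw [hF, h𝒜, ← saddlePrecondProduct_mul hAu hS hSu hX hXu, ← hQ,
      mul_nonsing_inv_cancel_right _ _ hQu, saddlePrecondProduct_pow_four hX hXu]
  have hFc4 : F.map Complex.ofReal ^ 4 = 1 :=
    (map_pow Complex.ofRealHom.mapMatrix F 4).symm.trans (by rw [hF4, map_one])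
  refine ⟨?_, exists_eq_mul_diagonal_mul_inv_of_isSemisimple
    (isSemisimple_toLin'_of_pow_eq_one (by norm_num) hFc4), fun μ hμ ↦
    Complex.pow_four_eq_one_iff.mp (spectrum.pow_eq_one_of_pow_eq_one hFc4 hμ)⟩
  rw [show (F - 1) * (F + 1) * (F ^ 2 + 1) = F ^ 4 - 1 by noncomm_ring, hF4, sub_self]
end

section
/- All eigenvalues of A·Q₃⁺⁻¹ and of Q₄⁺⁻¹·A equal 1; moreover (𝒜 (Q₃⁺)⁻¹ − I)³ = 0 and ((Q₄⁺)⁻¹ 𝒜 − I)² = 0, so GMRES preconditioned by Q₃⁺ (resp. Q₄⁺) converges in at most three (resp. two) iterations. -/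
/-!
Writing N₃ for the block matrix with blocks B A⁻¹ and -C S⁻¹ on the block subdiagonal and N₄ for
the one with blocks A⁻¹ Bᵀ S⁻¹ Cᵀ and -S⁻¹ Cᵀ in the last block column, the definitions of S and X
give the factorizations 𝒜 = (1 + N₃) Q₃⁺ = Q₄⁺ (1 + N₄). Hence 𝒜 Q₃⁺⁻¹ - 1 = N₃ and
Q₄⁺⁻¹ 𝒜 - 1 = N₄, and the shapes of N₃ and N₄ force N₃³ = 0 and N₄² = 0; a matrix M with M - 1
nilpotent has no eigenvalue other than 1. For the inverses to make sense: S and X are positive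
definite, being congruences of A⁻¹ and S⁻¹ by full-row-rank matrices, so the block upper triangular
Q₃⁺ is invertible, hence so is 𝒜 = (1 + N₃) Q₃⁺, hence so is Q₄⁺.
-/

open Matrix Complex

namespace Matrix

theorem vecMul_injective_of_rank_eq_card {K m n : Type*} [Field K] [Fintype m] [Fintype n]
    {B : Matrix m n K} (hB : B.rank = Fintype.card m) : Function.Injective B.vecMul := by
  rw [vecMul_injective_iff, linearIndependent_iff_card_eq_finrank_span, ← hB,
    rank_eq_finrank_span_row]
  rfl

theorem PosDef.mul_mul_transpose_of_rank_eq_card {m n : Type*} [Fintype m] [Fintype n]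
    {M : Matrix n n ℝ} (hM : M.PosDef) {B : Matrix m n ℝ} (hB : B.rank = Fintype.card m) :
    (B * M * Bᵀ).PosDef := by
  simpa using hM.mul_mul_conjTranspose_same (vecMul_injective_of_rank_eq_card hB)

theorem isNilpotent_map_sub_one {ι R S : Type*} [Fintype ι] [DecidableEq ι] [Ring R] [Ring S]
    (f : R →+* S) {M : Matrix ι ι R} (h : IsNilpotent (M - 1)) : IsNilpotent (M.map f - 1) := by
  simpa [map_sub] using h.map f.mapMatrix

theorem mul_inv_sub_one_of_eq_one_add_mul {ι K : Type*} [Fintype ι] [DecidableEq ι] [CommRing K]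
    {P Q N : Matrix ι ι K} (hQ : IsUnit Q) (h : P = (1 + N) * Q) : P * Q⁻¹ - 1 = N := by
  rw [h, mul_nonsing_inv_cancel_right _ _ ((isUnit_iff_isUnit_det Q).mp hQ), add_sub_cancel_left]

theorem inv_mul_sub_one_of_eq_mul_one_add {ι K : Type*} [Fintype ι] [DecidableEq ι] [CommRing K]
    {P Q N : Matrix ι ι K} (hQ : IsUnit Q) (h : P = Q * (1 + N)) : Q⁻¹ * P - 1 = N := by
  rw [h, nonsing_inv_mul_cancel_left _ _ ((isUnit_iff_isUnit_det Q).mp hQ), add_sub_cancel_left]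

end Matrix

theorem spectrum_subset_singleton_one_of_isNilpotent_sub_one {𝕜 A : Type*} [Field 𝕜] [Ring A]
    [Algebra 𝕜 A] {a : A} (h : IsNilpotent (a - 1)) : spectrum 𝕜 a ⊆ {1} := by
  intro μ hμ
  by_contra hne
  refine spectrum.mem_iff.mp hμ ?_
  have : algebraMap 𝕜 A μ - a = algebraMap 𝕜 A (μ - 1) + -(a - 1) := by
    rw [map_sub, map_one]; abel
  rw [this]
  exact h.neg.isUnit_add_left_of_commute ((sub_ne_zero.mpr hne).isUnit.map _)
    (Algebra.commutes _ _).symm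

section Blk3

variable {n m l : ℕ}

theorem blk3_zero : blk3 (0 : Matrix (Fin n) (Fin n) ℝ) 0 0 0 (0 : Matrix (Fin m) (Fin m) ℝ) 0 0 0
    (0 : Matrix (Fin l) (Fin l) ℝ) = 0 := by
  ext (i | i | i) (j | j | j) <;> rfl

theorem blk3_sub (a b c d e f g h i a' b' c' d' e' f' g' h' i') :
    blk3 (n := n) (m := m) (l := l) a b c d e f g h i - blk3 a' b' c' d' e' f' g' h' i' =
      blk3 (a - a') (b - b') (c - c') (d - d') (e - e') (f - f') (g - g') (h - h') (i - i') := by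
  ext (x | x | x) (y | y | y) <;> rfl

theorem blk3_mul_s7 (a b c d e f g h i a' b' c' d' e' f' g' h' i') :
    blk3 (n := n) (m := m) (l := l) a b c d e f g h i * blk3 a' b' c' d' e' f' g' h' i' =
      blk3 (a * a' + b * d' + c * g') (a * b' + b * e' + c * h') (a * c' + b * f' + c * i')
           (d * a' + e * d' + f * g') (d * b' + e * e' + f * h') (d * c' + e * f' + f * i')
           (g * a' + h * d' + i * g') (g * b' + h * e' + i * h') (g * c' + h * f' + i * i') := by
  ext (x | x | x) (y | y | y) <;>
    simp [blk3, mul_apply, fromBlocks, Fintype.sum_sum_type, add_assoc]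

theorem det_blk3_of_lower_eq_zero_s7 (a : Matrix (Fin n) (Fin n) ℝ) (b c)
    (e : Matrix (Fin m) (Fin m) ℝ) (f) (i : Matrix (Fin l) (Fin l) ℝ) :
    (blk3 a b c 0 e f 0 0 i).det = a.det * (e.det * i.det) := by
  have hlower : (of fun x y => Sum.elim (fun k => (0 : Matrix (Fin m) (Fin n) ℝ) k y)
      (fun k => (0 : Matrix (Fin l) (Fin n) ℝ) k y) x) = 0 := by
    ext (x | x) y <;> rfl
  rw [blk3, hlower, det_fromBlocks_zero₂₁, det_fromBlocks_zero₂₁]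

theorem blk3_subdiag_pow_three (d : Matrix (Fin m) (Fin n) ℝ) (h : Matrix (Fin l) (Fin m) ℝ) :
    blk3 0 0 0 d 0 0 0 h 0 ^ 3 = 0 := by
  rw [pow_succ, pow_two, blk3_mul_s7, blk3_mul_s7, ← blk3_zero]
  simp

theorem blk3_lastCol_sq (c : Matrix (Fin n) (Fin l) ℝ) (f : Matrix (Fin m) (Fin l) ℝ) :
    blk3 0 0 c 0 0 f 0 0 0 ^ 2 = 0 := by
  rw [pow_two, blk3_mul_s7, ← blk3_zero]
  simp

end Blk3

section Saddle

variable {n m l : ℕ} {A : Matrix (Fin n) (Fin n) ℝ} {B : Matrix (Fin m) (Fin n) ℝ}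
  {C : Matrix (Fin l) (Fin m) ℝ} {S : Matrix (Fin m) (Fin m) ℝ} {X : Matrix (Fin l) (Fin l) ℝ}

theorem blk3_saddle_eq_one_add_subdiag_mul (hA : IsUnit A.det) (hS : IsUnit S.det)
    (hSdef : S = B * A⁻¹ * Bᵀ) (hXdef : X = C * S⁻¹ * Cᵀ) :
    blk3 A Bᵀ 0 B 0 Cᵀ 0 C 0 =
      (1 + blk3 0 0 0 (B * A⁻¹) 0 0 0 (-(C * S⁻¹)) 0) * blk3 A Bᵀ 0 0 (-S) Cᵀ 0 0 X := by
  rw [add_mul, one_mul, blk3_mul_s7, ← sub_eq_iff_eq_add', blk3_sub]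
  congr 1 <;>
    simp [hSdef.symm, hXdef.symm, Matrix.mul_assoc, nonsing_inv_mul _ hA, nonsing_inv_mul _ hS]

theorem blk3_saddle_eq_mul_one_add_lastCol (hA : IsUnit A.det) (hS : IsUnit S.det)
    (hSdef : S = B * A⁻¹ * Bᵀ) (hXdef : X = C * S⁻¹ * Cᵀ) :
    blk3 A Bᵀ 0 B 0 Cᵀ 0 C 0 =
      blk3 A Bᵀ 0 B 0 0 0 C X *
        (1 + blk3 0 0 (A⁻¹ * Bᵀ * S⁻¹ * Cᵀ) 0 0 (-(S⁻¹ * Cᵀ)) 0 0 0) := by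
  rw [mul_add, mul_one, blk3_mul_s7, ← sub_eq_iff_eq_add', blk3_sub]
  congr 1 <;>
    simp [hSdef.symm, hXdef.symm, ← Matrix.mul_assoc, mul_nonsing_inv _ hA, mul_nonsing_inv _ hS]

end Saddle

theorem stmt7 {n m l : ℕ} (A : Matrix (Fin n) (Fin n) ℝ) (B : Matrix (Fin m) (Fin n) ℝ)
    (C : Matrix (Fin l) (Fin m) ℝ) (hA : A.PosDef) (hB : B.rank = m) (hC : C.rank = l)
    (S : Matrix (Fin m) (Fin m) ℝ) (hS : S = B * A⁻¹ * Bᵀ)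
    (X : Matrix (Fin l) (Fin l) ℝ) (hX : X = C * S⁻¹ * Cᵀ)
    (𝒜 Q₃p Q₄p : Matrix (Fin n ⊕ (Fin m ⊕ Fin l)) (Fin n ⊕ (Fin m ⊕ Fin l)) ℝ)
    (h𝒜 : 𝒜 = blk3 A Bᵀ 0 B 0 Cᵀ 0 C 0)
    (hQ₃ : Q₃p = blk3 A Bᵀ 0 0 (-S) Cᵀ 0 0 X)
    (hQ₄ : Q₄p = blk3 A Bᵀ 0 B 0 0 0 C X) :
    (∀ μ ∈ spectrum ℂ ((𝒜 * Q₃p⁻¹).map Complex.ofReal), μ = 1) ∧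
    (∀ μ ∈ spectrum ℂ ((Q₄p⁻¹ * 𝒜).map Complex.ofReal), μ = 1) ∧
    (𝒜 * Q₃p⁻¹ - 1) ^ 3 = 0 ∧
    (Q₄p⁻¹ * 𝒜 - 1) ^ 2 = 0 := by
  have hSpd : S.PosDef := hS ▸ hA.inv.mul_mul_transpose_of_rank_eq_card (by simpa using hB)
  have hXpd : X.PosDef := hX ▸ hSpd.inv.mul_mul_transpose_of_rank_eq_card (by simpa using hC)
  have hAdet := hA.det_pos.ne'.isUnit
  have hSdet := hSpd.det_pos.ne'.isUnit
  have hnegSdet : IsUnit (-S).det := by simpa [det_neg] using hSdet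
  have h₃ := blk3_saddle_eq_one_add_subdiag_mul hAdet hSdet hS hX
  have h₄ := blk3_saddle_eq_mul_one_add_lastCol hAdet hSdet hS hX
  rw [← h𝒜, ← hQ₃] at h₃
  rw [← h𝒜, ← hQ₄] at h₄
  have hQ₃unit : IsUnit Q₃p := by
    rw [isUnit_iff_isUnit_det, hQ₃, det_blk3_of_lower_eq_zero_s7]
    exact hAdet.mul (hnegSdet.mul hXpd.det_pos.ne'.isUnit)
  have h𝒜unit : IsUnit 𝒜 :=
    h₃ ▸ (IsNilpotent.isUnit_one_add ⟨3, blk3_subdiag_pow_three _ _⟩).mul hQ₃unit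
  rw [h₄] at h𝒜unit
  have hQ₄unit : IsUnit Q₄p :=
    (IsUnit.mul_right_iff (IsNilpotent.isUnit_one_add ⟨2, blk3_lastCol_sq _ _⟩)).mp h𝒜unit
  have hN₃ := mul_inv_sub_one_of_eq_one_add_mul hQ₃unit h₃
  have hN₄ := inv_mul_sub_one_of_eq_mul_one_add hQ₄unit h₄
  have hpow₃ : (𝒜 * Q₃p⁻¹ - 1) ^ 3 = 0 := hN₃ ▸ blk3_subdiag_pow_three _ _
  have hpow₄ : (Q₄p⁻¹ * 𝒜 - 1) ^ 2 = 0 := hN₄ ▸ blk3_lastCol_sq _ _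
  exact ⟨spectrum_subset_singleton_one_of_isNilpotent_sub_one
      (isNilpotent_map_sub_one ofRealHom ⟨3, hpow₃⟩),
    spectrum_subset_singleton_one_of_isNilpotent_sub_one
      (isNilpotent_map_sub_one ofRealHom ⟨2, hpow₄⟩), hpow₃, hpow₄⟩
end
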